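/- (Choice method) Let a ∈ S² be a unit vector and let λ₀, λ₁ be independent, each uniformly distributed on S². Define λ_s = λ₀ if |a·λ₁| ≤ |a·λ₀| and λ_s = λ₁ otherwise. Then λ_s is distributed with density ρ_a(λ) = |a·λ|/(2π) with respect to σ (i.e., for every measurable S ⊆ S², P(λ_s ∈ S) = (1/(2π)) ∫_S |a·λ| dσ(λ)), and P(λ_s = λ₀) = P(λ_s = λ₁) = 1/2. -/

import Mathlib

open MeasureTheory Metric
open scoped RealInnerProductSpace ENNReal

/-- The unit sphere in ℝ³. -/
noncomputable abbrev Sphere2 := Metric.sphere (0 : EuclideanSpace ℝ (Fin 3)) 1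

/-- The surface measure `σ` on the unit sphere of ℝ³ (total mass `4π`). -/
noncomputable def sphereMeasure : Measure Sphere2 :=
  (volume : Measure (EuclideanSpace ℝ (Fin 3))).toSphere

/-- The uniform probability measure `σ/(4π)` on the unit sphere of ℝ³. -/
noncomputable def uniformSphere : Measure Sphere2 :=
  (ENNReal.ofReal (4 * Real.pi))⁻¹ • sphereMeasure

/-- The joint distribution of two independent uniform points `(λ₀, λ₁)` on `S²`. -/
noncomputable def pairMeasure : Measure (Sphere2 × Sphere2) :=
  uniformSphere.prod uniformSphere

/-- The choice method: accept `λ₀` if `|a·λ₁| ≤ |a·λ₀|`, else accept `λ₁`. -/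
noncomputable def choice (a : EuclideanSpace ℝ (Fin 3)) (p : Sphere2 × Sphere2) : Sphere2 :=
  if |⟪a, (p.2 : EuclideanSpace ℝ (Fin 3))⟫| ≤ |⟪a, (p.1 : EuclideanSpace ℝ (Fin 3))⟫|
  then p.1 else p.2

open Set
open scoped Real Pointwise NNReal

lemma disk_vol (β : ℝ) :
    volume {v : Fin 2 → ℝ | v 0 ^ 2 + v 1 ^ 2 < β} = ENNReal.ofReal (Real.pi * β) := by
  rcases le_or_gt β 0 with hβ | hβ
  · have : {v : Fin 2 → ℝ | v 0 ^ 2 + v 1 ^ 2 < β} = ∅ := by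
      ext v; simp only [mem_setOf_eq, mem_empty_iff_false, iff_false, not_lt]
      nlinarith [sq_nonneg (v 0), sq_nonneg (v 1)]
    rw [this, measure_empty, eq_comm, ENNReal.ofReal_eq_zero]
    nlinarith [Real.pi_pos]
  · have hpre : ((MeasurableEquiv.toLp 2 (Fin 2 → ℝ)).symm) ⁻¹' {v : Fin 2 → ℝ | v 0 ^ 2 + v 1 ^ 2 < β}
        = ball (0 : EuclideanSpace ℝ (Fin 2)) (Real.sqrt β) := by
      ext x
      simp only [mem_preimage, mem_setOf_eq, mem_ball, dist_zero_right]
      rw [EuclideanSpace.norm_eq, Real.sqrt_lt_sqrt_iff (by positivity)]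
      have hx : ((MeasurableEquiv.toLp 2 (Fin 2 → ℝ)).symm) x = (x : Fin 2 → ℝ) := rfl
      rw [hx]
      simp [Fin.sum_univ_two, sq_abs]
    have := (EuclideanSpace.volume_preserving_symm_measurableEquiv_toLp (Fin 2)).measure_preimage
      (s := {v : Fin 2 → ℝ | v 0 ^ 2 + v 1 ^ 2 < β}) (by
        apply MeasurableSet.nullMeasurableSet
        exact measurableSet_lt (by measurability) measurable_const)
    rw [hpre] at this
    rw [← this, EuclideanSpace.volume_ball]
    have h2 : (Fintype.card (Fin 2)) = 2 := by simp
    rw [h2]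
    have hΓ : Real.Gamma ((2 : ℕ) / 2 + 1) = 1 := by
      norm_num
    rw [hΓ]
    rw [← ENNReal.ofReal_pow (Real.sqrt_nonneg _), Real.sq_sqrt hβ.le,
      ← ENNReal.ofReal_mul (le_of_lt hβ)]
    congr 1
    rw [Real.sq_sqrt Real.pi_pos.le]
    ring


lemma sec_vol (t s : ℝ) (ht0 : 0 < t) (ht1 : t ≤ 1) :
    volume {v : Fin 2 → ℝ | s ^ 2 + (v 0 ^ 2 + v 1 ^ 2) < 1
        ∧ s ^ 2 ≤ t ^ 2 * (s ^ 2 + (v 0 ^ 2 + v 1 ^ 2))}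
      = (Set.Ioo (-t) t).indicator (fun s => ENNReal.ofReal (Real.pi * (1 - s ^ 2 / t ^ 2))) s := by
  set c := s ^ 2 * (1 - t ^ 2) / t ^ 2 with hc_def
  have ht2 : t ^ 2 ≤ 1 := by nlinarith
  have hc0 : 0 ≤ c := div_nonneg (mul_nonneg (sq_nonneg s) (by linarith)) (by positivity)
  have hseteq : {v : Fin 2 → ℝ | s ^ 2 + (v 0 ^ 2 + v 1 ^ 2) < 1
        ∧ s ^ 2 ≤ t ^ 2 * (s ^ 2 + (v 0 ^ 2 + v 1 ^ 2))}
      = {v : Fin 2 → ℝ | v 0 ^ 2 + v 1 ^ 2 < 1 - s ^ 2} \ {v | v 0 ^ 2 + v 1 ^ 2 < c} := by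
    ext v
    simp only [mem_setOf_eq, mem_diff, not_lt]
    rw [hc_def, div_le_iff₀ (by positivity : (0:ℝ) < t ^ 2)]
    constructor
    · rintro ⟨h1, h2⟩; exact ⟨by linarith, by nlinarith⟩
    · rintro ⟨h1, h2⟩; exact ⟨by linarith, by nlinarith⟩
  rw [hseteq]
  by_cases hs : s ∈ Set.Ioo (-t) t
  · have hst : s ^ 2 < t ^ 2 := by
      obtain ⟨h1, h2⟩ := hs; nlinarith
    have hcβ : c ≤ 1 - s ^ 2 := by
      rw [hc_def, div_le_iff₀ (by positivity : (0:ℝ) < t ^ 2)]; nlinarith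
    have hsub : {v : Fin 2 → ℝ | v 0 ^ 2 + v 1 ^ 2 < c}
        ⊆ {v : Fin 2 → ℝ | v 0 ^ 2 + v 1 ^ 2 < 1 - s ^ 2} := fun v hv => lt_of_lt_of_le hv hcβ
    rw [measure_diff hsub (by
        exact (measurableSet_lt (by measurability) measurable_const).nullMeasurableSet)
      (by rw [disk_vol]; exact ENNReal.ofReal_ne_top)]
    rw [disk_vol, disk_vol, Set.indicator_of_mem hs, ← ENNReal.ofReal_sub _ (by positivity)]
    congr 1
    rw [hc_def]
    field_simp
    ring
  · have hst : t ^ 2 ≤ s ^ 2 := by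
      simp only [mem_Ioo, not_and_or, not_lt] at hs
      rcases hs with h | h <;> nlinarith
    have hempty : {v : Fin 2 → ℝ | v 0 ^ 2 + v 1 ^ 2 < 1 - s ^ 2} \ {v | v 0 ^ 2 + v 1 ^ 2 < c} = ∅ := by
      ext v
      simp only [mem_diff, mem_setOf_eq, not_lt, mem_empty_iff_false, iff_false, not_and]
      intro h1
      rw [hc_def, not_le, lt_div_iff₀ (by positivity : (0:ℝ) < t ^ 2)]
      nlinarith [mul_pos ht0 ht0, sq_nonneg (v 0), sq_nonneg (v 1)]
    rw [hempty, measure_empty, Set.indicator_of_notMem hs]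


example (u : Fin 3 → ℝ) : (MeasurableEquiv.piFinSuccAbove (fun _ : Fin 3 => ℝ) 0) u
    = (u 0, fun j => u ((0 : Fin 3).succAbove j)) := by
  exact rfl

lemma cone_vol_pi (t : ℝ) (ht0 : 0 < t) (ht1 : t ≤ 1) :
    volume {u : Fin 3 → ℝ | (∑ i, u i ^ 2) < 1 ∧ u 0 ^ 2 ≤ t ^ 2 * ∑ i, u i ^ 2}
      = ENNReal.ofReal (4 / 3 * Real.pi * t) := by
  set e := MeasurableEquiv.piFinSuccAbove (fun _ : Fin 3 => ℝ) 0 with he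
  set W : Set (ℝ × (Fin 2 → ℝ)) := {q | q.1 ^ 2 + (q.2 0 ^ 2 + q.2 1 ^ 2) < 1
      ∧ q.1 ^ 2 ≤ t ^ 2 * (q.1 ^ 2 + (q.2 0 ^ 2 + q.2 1 ^ 2))} with hW
  have hWm : MeasurableSet W := by
    rw [hW, setOf_and]
    exact (measurableSet_lt (by fun_prop) measurable_const).inter
      (measurableSet_le (by fun_prop) (by fun_prop))
  have hpre : {u : Fin 3 → ℝ | (∑ i, u i ^ 2) < 1 ∧ u 0 ^ 2 ≤ t ^ 2 * ∑ i, u i ^ 2}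
      = e ⁻¹' W := by
    ext u
    have hsum : ∑ i, u i ^ 2 = u 0 ^ 2 + ((fun j => u ((0 : Fin 3).succAbove j)) 0 ^ 2
        + (fun j => u ((0 : Fin 3).succAbove j)) 1 ^ 2) := by
      rw [Fin.sum_univ_succAbove (fun i => u i ^ 2) 0, Fin.sum_univ_two]
    simp only [mem_setOf_eq, mem_preimage, hW]
    rw [hsum]
    exact Iff.rfl
  rw [hpre, (volume_preserving_piFinSuccAbove (fun _ : Fin 3 => ℝ) 0).measure_preimage
    hWm.nullMeasurableSet]
  rw [Measure.volume_eq_prod, Measure.prod_apply hWm]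
  have hsec : ∀ s : ℝ, volume (Prod.mk s ⁻¹' W)
      = (Set.Ioo (-t) t).indicator (fun s => ENNReal.ofReal (Real.pi * (1 - s ^ 2 / t ^ 2))) s := by
    intro s
    have : Prod.mk s ⁻¹' W = {v : Fin 2 → ℝ | s ^ 2 + (v 0 ^ 2 + v 1 ^ 2) < 1
        ∧ s ^ 2 ≤ t ^ 2 * (s ^ 2 + (v 0 ^ 2 + v 1 ^ 2))} := rfl
    rw [this, sec_vol t s ht0 ht1]
  rw [lintegral_congr hsec, lintegral_indicator measurableSet_Ioo _]
  have hint : IntegrableOn (fun s : ℝ => Real.pi * (1 - s ^ 2 / t ^ 2)) (Set.Ioo (-t) t) := by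
    exact (Continuous.integrableOn_Icc (by continuity)).mono_set Ioo_subset_Icc_self
  have hnn : 0 ≤ᶠ[ae (volume.restrict (Set.Ioo (-t) t))] fun s : ℝ => Real.pi * (1 - s ^ 2 / t ^ 2) := by
    filter_upwards [ae_restrict_mem measurableSet_Ioo] with s hs
    have hst : s ^ 2 ≤ t ^ 2 := by obtain ⟨h1, h2⟩ := hs; nlinarith
    have : s ^ 2 / t ^ 2 ≤ 1 := by rw [div_le_one (by positivity)]; exact hst
    have hp := Real.pi_pos
    have : (0:ℝ) ≤ 1 - s ^ 2 / t ^ 2 := by linarith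
    exact mul_nonneg hp.le this
  rw [← ofReal_integral_eq_lintegral_ofReal hint hnn]
  congr 1
  rw [← integral_Ioc_eq_integral_Ioo, ← intervalIntegral.integral_of_le (by linarith : -t ≤ t)]
  have hii : IntervalIntegrable (fun s : ℝ => s ^ 2 / t ^ 2) volume (-t) t := by
    apply Continuous.intervalIntegrable; continuity
  rw [intervalIntegral.integral_const_mul, intervalIntegral.integral_sub
    (intervalIntegrable_const) hii, intervalIntegral.integral_div,
    integral_pow, intervalIntegral.integral_const]
  field_simp
  ring


lemma exists_onb (a : EuclideanSpace ℝ (Fin 3)) (ha : ‖a‖ = 1) :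
    ∃ b : OrthonormalBasis (Fin 3) ℝ (EuclideanSpace ℝ (Fin 3)), b 0 = a := by
  have horth : Orthonormal ℝ (Set.restrict {(0 : Fin 3)} (fun _ => a)) := by
    constructor
    · intro i; exact ha
    · intro i j hij
      exfalso
      apply hij
      have hi := i.2
      have hj := j.2
      simp only [Set.mem_singleton_iff] at hi hj
      exact Subtype.ext (hi.trans hj.symm)
  obtain ⟨b, hb⟩ := horth.exists_orthonormalBasis_extension_of_card_eq (by simp)
  exact ⟨b, hb 0 rfl⟩

lemma cone_vol_E (a : EuclideanSpace ℝ (Fin 3)) (ha : ‖a‖ = 1) (t : ℝ)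
    (ht0 : 0 < t) (ht1 : t ≤ 1) :
    volume {y : EuclideanSpace ℝ (Fin 3) | ‖y‖ < 1 ∧ |⟪a, y⟫| ≤ t * ‖y‖}
      = ENNReal.ofReal (4 / 3 * Real.pi * t) := by
  obtain ⟨b, hba⟩ := exists_onb a ha
  set Tpi : Set (Fin 3 → ℝ) :=
    {u | (∑ i, u i ^ 2) < 1 ∧ u 0 ^ 2 ≤ t ^ 2 * ∑ i, u i ^ 2} with hTpi
  have hTm : MeasurableSet Tpi := by
    rw [hTpi, setOf_and]
    exact (measurableSet_lt (by fun_prop) measurable_const).inter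
      (measurableSet_le (by fun_prop) (by fun_prop))
  have key : ∀ y : EuclideanSpace ℝ (Fin 3),
      (‖y‖ < 1 ∧ |⟪a, y⟫| ≤ t * ‖y‖) ↔
        (((MeasurableEquiv.toLp 2 (Fin 3 → ℝ)).symm) (b.repr y)) ∈ Tpi := by
    intro y
    have hco : ((MeasurableEquiv.toLp 2 (Fin 3 → ℝ)).symm) (b.repr y) = (b.repr y : Fin 3 → ℝ) := rfl
    have h0 : (b.repr y) 0 = ⟪a, y⟫ := by rw [b.repr_apply_apply, hba]
    have hsum : ∑ i, (b.repr y) i ^ 2 = ‖y‖ ^ 2 := by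
      rw [← b.repr.norm_map y, EuclideanSpace.norm_eq,
        Real.sq_sqrt (by positivity)]
      simp [sq_abs]
    rw [hTpi]
    simp only [hco, mem_setOf_eq, hsum, h0]
    constructor
    · rintro ⟨h1, h2⟩
      refine ⟨by nlinarith [norm_nonneg y], ?_⟩
      have := abs_nonneg ⟪a, y⟫
      nlinarith [sq_abs ⟪a, y⟫]
    · rintro ⟨h1, h2⟩
      have hn : 0 ≤ ‖y‖ := norm_nonneg y
      constructor
      · nlinarith
      · have h3 : |⟪a, y⟫| ^ 2 ≤ (t * ‖y‖) ^ 2 := by rw [sq_abs]; nlinarith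
        have h4 : 0 ≤ t * ‖y‖ := by positivity
        nlinarith [abs_nonneg ⟪a, y⟫]
  have hset : {y : EuclideanSpace ℝ (Fin 3) | ‖y‖ < 1 ∧ |⟪a, y⟫| ≤ t * ‖y‖}
      = b.repr ⁻¹' (((MeasurableEquiv.toLp 2 (Fin 3 → ℝ)).symm) ⁻¹' Tpi) := by
    ext y; exact key y
  rw [hset, b.measurePreserving_repr.measure_preimage
      ((((MeasurableEquiv.toLp 2 (Fin 3 → ℝ)).symm).measurable hTm).nullMeasurableSet),
    (EuclideanSpace.volume_preserving_symm_measurableEquiv_toLp (Fin 3)).measure_preimage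
      hTm.nullMeasurableSet]
  exact cone_vol_pi t ht0 ht1



lemma inner_continuous (a : EuclideanSpace ℝ (Fin 3)) :
    Continuous fun l : Sphere2 => ⟪a, (l : EuclideanSpace ℝ (Fin 3))⟫ :=
  Continuous.inner continuous_const continuous_subtype_val

lemma cap_measurable (a : EuclideanSpace ℝ (Fin 3)) (t : ℝ) :
    MeasurableSet {l : Sphere2 | |⟪a, (l : EuclideanSpace ℝ (Fin 3))⟫| ≤ t} :=
  measurableSet_le (inner_continuous a).abs.measurable measurable_const

lemma cap_meas (a : EuclideanSpace ℝ (Fin 3)) (ha : ‖a‖ = 1) (t : ℝ)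
    (ht0 : 0 ≤ t) (ht1 : t ≤ 1) :
    sphereMeasure {l : Sphere2 | |⟪a, (l : EuclideanSpace ℝ (Fin 3))⟫| ≤ t}
      = ENNReal.ofReal (4 * Real.pi * t) := by
  rw [sphereMeasure, Measure.toSphere_apply' _ (cap_measurable a t)]
  have hdim : Module.finrank ℝ (EuclideanSpace ℝ (Fin 3)) = 3 := by simp
  rw [hdim]
  rcases eq_or_lt_of_le ht0 with h0 | h0
  · -- t = 0
    subst h0
    have hker : (Set.Ioo (0:ℝ) 1 •
        ((↑) '' {l : Sphere2 | |⟪a, (l : EuclideanSpace ℝ (Fin 3))⟫| ≤ (0:ℝ)}))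
        ⊆ ((LinearMap.ker (innerSL ℝ a : EuclideanSpace ℝ (Fin 3) →ₗ[ℝ] ℝ) : Submodule ℝ (EuclideanSpace ℝ (Fin 3))) : Set (EuclideanSpace ℝ (Fin 3))) := by
      rintro y ⟨r, hr, x, ⟨l, hl, rfl⟩, rfl⟩
      have : ⟪a, (l : EuclideanSpace ℝ (Fin 3))⟫ = 0 := by
        have := hl
        simp only [mem_setOf_eq, abs_nonpos_iff] at this
        exact this
      simp only [SetLike.mem_coe, LinearMap.mem_ker]
      show ⟪a, r • (l : EuclideanSpace ℝ (Fin 3))⟫ = 0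
      rw [real_inner_smul_right, this, mul_zero]
    have hne : LinearMap.ker (innerSL ℝ a : EuclideanSpace ℝ (Fin 3) →ₗ[ℝ] ℝ) ≠ ⊤ := by
      intro h
      have hmem : a ∈ LinearMap.ker (innerSL ℝ a : EuclideanSpace ℝ (Fin 3) →ₗ[ℝ] ℝ) := h ▸ Submodule.mem_top
      rw [LinearMap.mem_ker] at hmem
      have : ⟪a, a⟫ = (1:ℝ) := by
        rw [real_inner_self_eq_norm_sq, ha]; norm_num
      rw [show ((innerSL ℝ a : EuclideanSpace ℝ (Fin 3) →ₗ[ℝ] ℝ) a) = ⟪a, a⟫ from rfl, this] at hmem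
      norm_num at hmem
    rw [measure_mono_null hker (Measure.addHaar_submodule _ _ hne)]
    simp
  · -- 0 < t
    have hsmul : Set.Ioo (0:ℝ) 1 •
        ((↑) '' {l : Sphere2 | |⟪a, (l : EuclideanSpace ℝ (Fin 3))⟫| ≤ t})
        = {y : EuclideanSpace ℝ (Fin 3) | ‖y‖ < 1 ∧ |⟪a, y⟫| ≤ t * ‖y‖} \ {0} := by
      ext y
      constructor
      · rintro ⟨r, hr, x, ⟨l, hl, rfl⟩, rfl⟩
        have hln : ‖(l : EuclideanSpace ℝ (Fin 3))‖ = 1 := by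
          simpa [mem_sphere_zero_iff_norm] using l.2
        have hrn : ‖r • (l : EuclideanSpace ℝ (Fin 3))‖ = r := by
          rw [norm_smul, hln, mul_one, Real.norm_eq_abs, abs_of_pos hr.1]
        refine ⟨⟨by rw [hrn]; exact hr.2, ?_⟩, ?_⟩
        · rw [real_inner_smul_right, abs_mul, abs_of_pos hr.1, hrn]
          calc r * |⟪a, (l : EuclideanSpace ℝ (Fin 3))⟫| ≤ r * t :=
              mul_le_mul_of_nonneg_left hl hr.1.le
          _ = t * r := mul_comm _ _
        · simp only [mem_singleton_iff]
          intro h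
          rw [h, norm_zero] at hrn
          exact hr.1.ne' hrn.symm
      · rintro ⟨⟨hy1, hyt⟩, hy0⟩
        simp only [mem_singleton_iff] at hy0
        have hny : 0 < ‖y‖ := norm_pos_iff.2 hy0
        have hxs : ‖y‖⁻¹ • y ∈ Metric.sphere (0 : EuclideanSpace ℝ (Fin 3)) 1 := by
          rw [mem_sphere_zero_iff_norm, norm_smul, Real.norm_eq_abs,
            abs_of_pos (inv_pos.2 hny), inv_mul_cancel₀ hny.ne']
        refine ⟨‖y‖, ⟨hny, hy1⟩, ‖y‖⁻¹ • y, ⟨⟨‖y‖⁻¹ • y, hxs⟩, ?_, rfl⟩, ?_⟩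
        · simp only [mem_setOf_eq]
          rw [real_inner_smul_right, abs_mul, abs_of_pos (inv_pos.2 hny)]
          rw [← mul_le_mul_iff_right₀ hny]
          calc ‖y‖ * (‖y‖⁻¹ * |⟪a, y⟫|) = |⟪a, y⟫| := by field_simp
          _ ≤ t * ‖y‖ := hyt
          _ = ‖y‖ * t := by ring
        · show ‖y‖ • (‖y‖⁻¹ • y) = y
          rw [smul_inv_smul₀ hny.ne']
    rw [hsmul, measure_diff_null (measure_singleton 0), cone_vol_E a ha t h0 ht1,
      show ((3:ℕ):ℝ≥0∞) = ENNReal.ofReal 3 by simp,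
      ← ENNReal.ofReal_mul (by norm_num)]
    congr 1
    ring



lemma inner_abs_le_one (a : EuclideanSpace ℝ (Fin 3)) (ha : ‖a‖ = 1) (l : Sphere2) :
    |⟪a, (l : EuclideanSpace ℝ (Fin 3))⟫| ≤ 1 := by
  have h := abs_real_inner_le_norm a (l : EuclideanSpace ℝ (Fin 3))
  have hl : ‖(l : EuclideanSpace ℝ (Fin 3))‖ = 1 := by
    simpa [mem_sphere_zero_iff_norm] using l.2
  rw [ha, hl, one_mul] at h
  exact h

lemma fourpi_pos : (0:ℝ) < 4 * Real.pi := by positivity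

instance : IsFiniteMeasure sphereMeasure := by unfold sphereMeasure; infer_instance

lemma sphere_univ : sphereMeasure (Set.univ : Set Sphere2) = ENNReal.ofReal (4 * Real.pi) := by
  have ha : ‖(EuclideanSpace.single 0 1 : EuclideanSpace ℝ (Fin 3))‖ = 1 := by
    simp [EuclideanSpace.norm_single]
  have h := cap_meas _ ha 1 zero_le_one le_rfl
  rw [mul_one] at h
  rw [← h]
  congr 1
  ext l
  simp only [mem_univ, mem_setOf_eq, true_iff]
  exact inner_abs_le_one _ ha l

instance : IsProbabilityMeasure uniformSphere := by
  constructor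
  rw [uniformSphere, Measure.smul_apply, sphere_univ, smul_eq_mul,
    ENNReal.inv_mul_cancel (by simp [fourpi_pos, Real.pi_pos]) ENNReal.ofReal_ne_top]

lemma unif_le (a : EuclideanSpace ℝ (Fin 3)) (ha : ‖a‖ = 1) (t : ℝ)
    (ht0 : 0 ≤ t) (ht1 : t ≤ 1) :
    uniformSphere {l : Sphere2 | |⟪a, (l : EuclideanSpace ℝ (Fin 3))⟫| ≤ t}
      = ENNReal.ofReal t := by
  rw [uniformSphere, Measure.smul_apply, cap_meas a ha t ht0 ht1, smul_eq_mul,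
    ENNReal.ofReal_mul fourpi_pos.le, ← mul_assoc,
    ENNReal.inv_mul_cancel (by simp [fourpi_pos, Real.pi_pos]) ENNReal.ofReal_ne_top, one_mul]

lemma unif_eq_zero (a : EuclideanSpace ℝ (Fin 3)) (ha : ‖a‖ = 1) (c : ℝ) :
    uniformSphere {l : Sphere2 | |⟪a, (l : EuclideanSpace ℝ (Fin 3))⟫| = c} = 0 := by
  rcases lt_or_ge c 0 with hc | hc
  · convert measure_empty (μ := uniformSphere)
    ext l; simp only [mem_setOf_eq, mem_empty_iff_false, iff_false]
    intro h; exact absurd (h ▸ abs_nonneg _) (not_le.2 hc)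
  rcases lt_or_ge 1 c with hc1 | hc1
  · convert measure_empty (μ := uniformSphere)
    ext l; simp only [mem_setOf_eq, mem_empty_iff_false, iff_false]
    intro h; exact absurd (h ▸ inner_abs_le_one a ha l) (not_le.2 hc1)
  rcases eq_or_lt_of_le hc with h0 | h0
  · refine measure_mono_null (fun l hl => ?_) (by
      rw [unif_le a ha 0 le_rfl zero_le_one]; simp :
      uniformSphere {l : Sphere2 | |⟪a, (l : EuclideanSpace ℝ (Fin 3))⟫| ≤ 0} = 0)
    simp only [mem_setOf_eq] at hl ⊢
    rw [hl, ← h0]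
  · -- 0 < c ≤ 1
    have key : ∀ ε : ℝ, 0 < ε → ε ≤ c →
        uniformSphere {l : Sphere2 | |⟪a, (l : EuclideanSpace ℝ (Fin 3))⟫| = c}
          ≤ ENNReal.ofReal ε := by
      intro ε hε hεc
      have hdisj : Disjoint {l : Sphere2 | |⟪a, (l : EuclideanSpace ℝ (Fin 3))⟫| ≤ c - ε}
          {l : Sphere2 | |⟪a, (l : EuclideanSpace ℝ (Fin 3))⟫| = c} := by
        rw [Set.disjoint_left]
        intro l h1 h2
        simp only [mem_setOf_eq] at h1 h2
        rw [h2] at h1; linarith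
      have hmeas : MeasurableSet {l : Sphere2 | |⟪a, (l : EuclideanSpace ℝ (Fin 3))⟫| = c} :=
        measurableSet_eq_fun (inner_continuous a).abs.measurable measurable_const
      have hsub : {l : Sphere2 | |⟪a, (l : EuclideanSpace ℝ (Fin 3))⟫| ≤ c - ε}
          ∪ {l : Sphere2 | |⟪a, (l : EuclideanSpace ℝ (Fin 3))⟫| = c}
          ⊆ {l : Sphere2 | |⟪a, (l : EuclideanSpace ℝ (Fin 3))⟫| ≤ c} := by
        rintro l (hl | hl) <;> simp only [mem_setOf_eq] at *
        · linarith
        · exact le_of_eq hl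
      have := measure_mono (μ := uniformSphere) hsub
      rw [measure_union hdisj hmeas, unif_le a ha _ (by linarith) (by linarith),
        unif_le a ha c hc hc1] at this
      have hsub2 : uniformSphere {l : Sphere2 | |⟪a, (l : EuclideanSpace ℝ (Fin 3))⟫| = c}
          ≤ ENNReal.ofReal c - ENNReal.ofReal (c - ε) :=
        ENNReal.le_sub_of_add_le_left (by simp) this
      calc uniformSphere {l : Sphere2 | |⟪a, (l : EuclideanSpace ℝ (Fin 3))⟫| = c}
          ≤ ENNReal.ofReal c - ENNReal.ofReal (c - ε) := hsub2
        _ = ENNReal.ofReal (c - (c - ε)) := (ENNReal.ofReal_sub _ (by linarith)).symm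
        _ = ENNReal.ofReal ε := by ring_nf
    refine le_antisymm ?_ zero_le
    refine ENNReal.le_of_forall_pos_le_add (fun ε hε _ => ?_)
    rw [zero_add]
    calc uniformSphere {l : Sphere2 | |⟪a, (l : EuclideanSpace ℝ (Fin 3))⟫| = c}
        ≤ ENNReal.ofReal (min c (ε : ℝ)) := key _ (lt_min h0 (by exact_mod_cast hε)) (min_le_left _ _)
      _ ≤ ENNReal.ofReal (ε : ℝ) := ENNReal.ofReal_le_ofReal (min_le_right _ _)
      _ = (ε : ℝ≥0∞) := ENNReal.ofReal_coe_nnreal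

lemma unif_lt (a : EuclideanSpace ℝ (Fin 3)) (ha : ‖a‖ = 1) (t : ℝ)
    (ht0 : 0 ≤ t) (ht1 : t ≤ 1) :
    uniformSphere {l : Sphere2 | |⟪a, (l : EuclideanSpace ℝ (Fin 3))⟫| < t}
      = ENNReal.ofReal t := by
  have hsplit : {l : Sphere2 | |⟪a, (l : EuclideanSpace ℝ (Fin 3))⟫| ≤ t}
      = {l : Sphere2 | |⟪a, (l : EuclideanSpace ℝ (Fin 3))⟫| < t}
        ∪ {l : Sphere2 | |⟪a, (l : EuclideanSpace ℝ (Fin 3))⟫| = t} := by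
    ext l; simp only [mem_setOf_eq, mem_union]; exact le_iff_lt_or_eq
  have hdisj : Disjoint {l : Sphere2 | |⟪a, (l : EuclideanSpace ℝ (Fin 3))⟫| < t}
      {l : Sphere2 | |⟪a, (l : EuclideanSpace ℝ (Fin 3))⟫| = t} := by
    rw [Set.disjoint_left]; intro l h1 h2
    simp only [mem_setOf_eq] at h1 h2; rw [h2] at h1; exact lt_irrefl _ h1
  have hmeas : MeasurableSet {l : Sphere2 | |⟪a, (l : EuclideanSpace ℝ (Fin 3))⟫| = t} :=
    measurableSet_eq_fun (inner_continuous a).abs.measurable measurable_const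
  have := unif_le a ha t ht0 ht1
  rw [hsplit, measure_union hdisj hmeas, unif_eq_zero a ha t, add_zero] at this
  exact this

lemma unif_singleton (x : Sphere2) : uniformSphere {x} = 0 := by
  have hx : ‖(x : EuclideanSpace ℝ (Fin 3))‖ = 1 := by
    simpa [mem_sphere_zero_iff_norm] using x.2
  refine measure_mono_null (fun l hl => ?_) (unif_eq_zero (x : EuclideanSpace ℝ (Fin 3)) hx 1)
  simp only [mem_singleton_iff] at hl
  subst hl
  simp only [mem_setOf_eq]
  rw [real_inner_self_eq_norm_sq, hx]
  norm_num



instance : IsProbabilityMeasure pairMeasure := by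
  unfold pairMeasure; infer_instance


/-- **Choice method.** With `λ₀, λ₁` independent uniform on `S²` and
`λ_s = λ₀` if `|a·λ₁| ≤ |a·λ₀|`, `λ_s = λ₁` otherwise, the sample `λ_s` has density
`ρ_a(λ) = |a·λ|/(2π)` with respect to `σ`, and each of `λ₀, λ₁` is accepted with
probability `1/2`. -/
theorem choice_method (a : EuclideanSpace ℝ (Fin 3)) (ha : ‖a‖ = 1) :
    (∀ S : Set Sphere2, MeasurableSet S →
      pairMeasure {p | choice a p ∈ S}
        = ENNReal.ofReal ((1 / (2 * Real.pi)) *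
            ∫ l in S, |⟪a, (l : EuclideanSpace ℝ (Fin 3))⟫| ∂sphereMeasure)) ∧
    pairMeasure {p | choice a p = p.1} = 1 / 2 ∧
    pairMeasure {p | choice a p = p.2} = 1 / 2 := by
  have habs : Continuous fun l : Sphere2 => |⟪a, (l : EuclideanSpace ℝ (Fin 3))⟫| :=
    (inner_continuous a).abs
  set C : Set (Sphere2 × Sphere2) :=
    {p | |⟪a, (p.2 : EuclideanSpace ℝ (Fin 3))⟫| ≤ |⟪a, (p.1 : EuclideanSpace ℝ (Fin 3))⟫|}
    with hC
  have hCm : MeasurableSet C :=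
    measurableSet_le (habs.comp continuous_snd).measurable (habs.comp continuous_fst).measurable
  -- the diagonal
  set D : Set (Sphere2 × Sphere2) := {p | p.1 = p.2} with hD
  have hDm : MeasurableSet D := (isClosed_eq continuous_fst continuous_snd).measurableSet
  have hDzero : pairMeasure D = 0 := by
    rw [pairMeasure, Measure.prod_apply hDm]
    have hsec : ∀ l0 : Sphere2, uniformSphere (Prod.mk l0 ⁻¹' D) = 0 := by
      intro l0
      have : Prod.mk l0 ⁻¹' D = {l0} := by
        ext l1; simp [hD, eq_comm]
      rw [this, unif_singleton]
    simp only [hsec, lintegral_zero]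
  -- pairMeasure C = 1/2
  have hCval : pairMeasure C = 1 / 2 := by
    have hCm' : MeasurableSet (Prod.swap ⁻¹' C : Set (Sphere2 × Sphere2)) :=
      hCm.preimage measurable_swap
    have hswap : pairMeasure (Prod.swap ⁻¹' C) = pairMeasure C := by
      rw [pairMeasure, ← Measure.map_apply measurable_swap hCm, Measure.prod_swap]
    have hunion : C ∪ Prod.swap ⁻¹' C = univ := by
      ext p
      simp only [hC, mem_union, mem_preimage, Prod.fst_swap, Prod.snd_swap, mem_setOf_eq,
        mem_univ, iff_true]
      exact le_total _ _
    have hinter : pairMeasure (C ∩ Prod.swap ⁻¹' C) = 0 := by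
      rw [pairMeasure, Measure.prod_apply (hCm.inter hCm')]
      have hsec : ∀ l0 : Sphere2, uniformSphere (Prod.mk l0 ⁻¹' (C ∩ Prod.swap ⁻¹' C)) = 0 := by
        intro l0
        refine measure_mono_null (fun l1 h => ?_)
          (unif_eq_zero a ha |⟪a, (l0 : EuclideanSpace ℝ (Fin 3))⟫|)
        simp only [hC, mem_preimage, mem_inter_iff, mem_setOf_eq, Prod.fst_swap,
          Prod.snd_swap] at h
        exact le_antisymm h.1 h.2
      simp only [hsec, lintegral_zero]
    have hkey := measure_union_add_inter (μ := pairMeasure) C hCm'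
    rw [hunion, hinter, hswap, measure_univ, add_zero, ← two_mul] at hkey
    exact (ENNReal.eq_div_iff two_ne_zero ENNReal.ofNat_ne_top).2 hkey.symm
  refine ⟨?_, ?_, ?_⟩
  · -- density
    intro S hS
    set T1 : Set (Sphere2 × Sphere2) := (Prod.fst ⁻¹' S) ∩ C with hT1
    set T2 : Set (Sphere2 × Sphere2) := (Prod.snd ⁻¹' S) ∩ Cᶜ with hT2
    have hT1m : MeasurableSet T1 := (hS.preimage measurable_fst).inter hCm
    have hT2m : MeasurableSet T2 := (hS.preimage measurable_snd).inter hCm.compl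
    have hTsplit : {p | choice a p ∈ S} = T1 ∪ T2 := by
      ext p
      simp only [choice, mem_setOf_eq, hT1, hT2, mem_union, mem_inter_iff, mem_preimage,
        mem_compl_iff, hC, mem_setOf_eq]
      by_cases h : |⟪a, (p.2 : EuclideanSpace ℝ (Fin 3))⟫|
          ≤ |⟪a, (p.1 : EuclideanSpace ℝ (Fin 3))⟫|
      · rw [if_pos h]; tauto
      · rw [if_neg h]; tauto
    have hdisj : Disjoint T1 T2 := by
      rw [Set.disjoint_left]
      rintro p ⟨_, hp1⟩ ⟨_, hp2⟩
      exact hp2 hp1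
    -- first piece
    have hval1 : pairMeasure T1
        = ∫⁻ l in S, ENNReal.ofReal |⟪a, (l : EuclideanSpace ℝ (Fin 3))⟫| ∂uniformSphere := by
      rw [pairMeasure, Measure.prod_apply hT1m]
      have hsec : ∀ l0 : Sphere2, uniformSphere (Prod.mk l0 ⁻¹' T1)
          = S.indicator (fun l => ENNReal.ofReal |⟪a, (l : EuclideanSpace ℝ (Fin 3))⟫|) l0 := by
        intro l0
        by_cases h : l0 ∈ S
        · have : Prod.mk l0 ⁻¹' T1 = {l1 : Sphere2 |
              |⟪a, (l1 : EuclideanSpace ℝ (Fin 3))⟫|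
                ≤ |⟪a, (l0 : EuclideanSpace ℝ (Fin 3))⟫|} := by
            ext l1; simp [hT1, hC, h]
          rw [this, unif_le a ha _ (abs_nonneg _) (inner_abs_le_one a ha l0),
            indicator_of_mem h]
        · have : Prod.mk l0 ⁻¹' T1 = ∅ := by
            ext l1; simp [hT1, hC, h]
          rw [this, measure_empty, indicator_of_notMem h]
      rw [lintegral_congr hsec, lintegral_indicator hS]
    -- second piece via swap
    have hval2 : pairMeasure T2
        = ∫⁻ l in S, ENNReal.ofReal |⟪a, (l : EuclideanSpace ℝ (Fin 3))⟫| ∂uniformSphere := by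
      have hswap : pairMeasure (Prod.swap ⁻¹' T2) = pairMeasure T2 := by
        rw [pairMeasure, ← Measure.map_apply measurable_swap hT2m, Measure.prod_swap]
      rw [← hswap, pairMeasure, Measure.prod_apply (hT2m.preimage measurable_swap)]
      have hsec : ∀ l0 : Sphere2, uniformSphere (Prod.mk l0 ⁻¹' (Prod.swap ⁻¹' T2))
          = S.indicator (fun l => ENNReal.ofReal |⟪a, (l : EuclideanSpace ℝ (Fin 3))⟫|) l0 := by
        intro l0
        by_cases h : l0 ∈ S
        · have : Prod.mk l0 ⁻¹' (Prod.swap ⁻¹' T2) = {l1 : Sphere2 |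
              |⟪a, (l1 : EuclideanSpace ℝ (Fin 3))⟫|
                < |⟪a, (l0 : EuclideanSpace ℝ (Fin 3))⟫|} := by
            ext l1
            simp [hT2, hC, h, not_le]
          rw [this, unif_lt a ha _ (abs_nonneg _) (inner_abs_le_one a ha l0),
            indicator_of_mem h]
        · have : Prod.mk l0 ⁻¹' (Prod.swap ⁻¹' T2) = ∅ := by
            ext l1; simp [hT2, hC, h]
          rw [this, measure_empty, indicator_of_notMem h]
      rw [lintegral_congr hsec, lintegral_indicator hS]
    -- put together
    rw [hTsplit, measure_union hdisj hT2m, hval1, hval2]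
    -- convert lintegral over uniform to integral over sphereMeasure
    have hrestr : uniformSphere.restrict S
        = (ENNReal.ofReal (4 * Real.pi))⁻¹ • sphereMeasure.restrict S := by
      rw [uniformSphere, Measure.restrict_smul]
    have hint : IntegrableOn (fun l : Sphere2 => |⟪a, (l : EuclideanSpace ℝ (Fin 3))⟫|) S
        sphereMeasure := by
      refine Integrable.mono' (integrable_const 1) habs.aestronglyMeasurable
        (Filter.Eventually.of_forall fun l => ?_)
      rw [Real.norm_eq_abs, abs_abs]
      exact inner_abs_le_one a ha l
    have hofReal : ENNReal.ofReal (∫ l in S, |⟪a, (l : EuclideanSpace ℝ (Fin 3))⟫| ∂sphereMeasure)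
        = ∫⁻ l in S, ENNReal.ofReal |⟪a, (l : EuclideanSpace ℝ (Fin 3))⟫| ∂sphereMeasure :=
      ofReal_integral_eq_lintegral_ofReal hint
        (Filter.Eventually.of_forall fun l => abs_nonneg _)
    rw [hrestr, lintegral_smul_measure, ← hofReal,
      ENNReal.ofReal_mul (by positivity : (0:ℝ) ≤ 1 / (2 * Real.pi))]
    rw [smul_eq_mul, ← add_mul]
    congr 1
    rw [show (1 : ℝ) / (2 * Real.pi) = (2 * Real.pi)⁻¹ by rw [one_div],
      ENNReal.ofReal_inv_of_pos (by positivity),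
      show (4 : ℝ) * Real.pi = 2 * (2 * Real.pi) by ring,
      ENNReal.ofReal_mul (by norm_num : (0:ℝ) ≤ 2), ENNReal.ofReal_ofNat,
      ENNReal.mul_inv (Or.inl two_ne_zero) (Or.inl ENNReal.ofNat_ne_top), ← two_mul,
      ← mul_assoc, ENNReal.mul_inv_cancel two_ne_zero ENNReal.ofNat_ne_top, one_mul]
  · -- accepted λ₀ with probability 1/2
    have hsub1 : C ⊆ {p | choice a p = p.1} := by
      intro p hp
      simp only [hC, mem_setOf_eq] at hp
      simp only [mem_setOf_eq, choice, if_pos hp]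
    have hsub2 : {p | choice a p = p.1} ⊆ C ∪ D := by
      intro p hp
      by_cases h : |⟪a, (p.2 : EuclideanSpace ℝ (Fin 3))⟫|
          ≤ |⟪a, (p.1 : EuclideanSpace ℝ (Fin 3))⟫|
      · exact Or.inl h
      · right
        have h2 : choice a p = p.2 := by simp only [choice, if_neg h]
        simp only [hD, mem_setOf_eq]
        rw [← hp, h2]
    refine le_antisymm ?_ ?_
    · calc pairMeasure {p | choice a p = p.1} ≤ pairMeasure (C ∪ D) := measure_mono hsub2
        _ ≤ pairMeasure C + pairMeasure D := measure_union_le _ _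
        _ = 1 / 2 := by rw [hCval, hDzero, add_zero]
    · rw [← hCval]; exact measure_mono hsub1
  · -- accepted λ₁ with probability 1/2
    have hCc : pairMeasure Cᶜ = 1 / 2 := by
      rw [measure_compl hCm (measure_ne_top _ _), hCval, measure_univ]
      exact ENNReal.sub_half ENNReal.one_ne_top
    have hsub1 : Cᶜ ⊆ {p | choice a p = p.2} := by
      intro p hp
      simp only [mem_compl_iff, hC, mem_setOf_eq] at hp
      simp only [mem_setOf_eq, choice, if_neg hp]
    have hsub2 : {p | choice a p = p.2} ⊆ Cᶜ ∪ D := by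
      intro p hp
      by_cases h : |⟪a, (p.2 : EuclideanSpace ℝ (Fin 3))⟫|
          ≤ |⟪a, (p.1 : EuclideanSpace ℝ (Fin 3))⟫|
      · right
        have h1 : choice a p = p.1 := by simp only [choice, if_pos h]
        simp only [hD, mem_setOf_eq]
        rw [← hp, h1]
      · exact Or.inl h
    refine le_antisymm ?_ ?_
    · calc pairMeasure {p | choice a p = p.2} ≤ pairMeasure (Cᶜ ∪ D) := measure_mono hsub2
        _ ≤ pairMeasure Cᶜ + pairMeasure D := measure_union_le _ _
        _ = 1 / 2 := by rw [hCc, hDzero, add_zero]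
    · rw [← hCc]; exact measure_mono hsub1
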